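/- Let g = so(3) × (Fin 3 → ℝ) be the product of the Lie algebra of real skew-symmetric 3×3 matrices with the three-dimensional abelian Lie algebra, and let μ be the skew-symmetric bilinear bracket on ℝ⁶ = (Fin 6 → ℝ) (standard basis e₁,…,e₆) determined by μ(e₁,e₂) = e₆, μ(e₁,e₃) = e₄, μ(e₂,e₃) = −e₅ and all other basis brackets zero (the nilpotent Lie algebra A_{6,3}). Then A_{6,3} is a contraction of so(3) ⊕ 3L₁: there exists a family φ : ℝ → ((Fin 6 → ℝ) ≃ₗ[ℝ] g) of linear equivalences such that for all x, y ∈ Fin 6 → ℝ, (φ t).symm ⁅φ t x, φ t y⁆ converges to μ(x, y) as t → +∞. -/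

import Mathlib

/-!
Identify `so(3)` with `(ℝ³, ×)` through cross-product matrices. For a Lie algebra `k`, an abelian
`z` and a linear `S : k → z`, the maps `(a, b) ↦ (u⁻¹ a, u b + u² S a)` of `k × z` conjugate the
bracket to `((a, b), (a', b')) ↦ (u⁻¹ ⁅a, a'⁆, -S ⁅a, a'⁆)`, which tends to the two-step nilpotent
bracket `(0, -S ⁅a, a'⁆)` as `u → ∞`. With `S` the identification `so(3) ≅ ℝ³` this limit is
`A_{6,3}` in suitable coordinates; and `μ`, being alternating, is determined by the given brackets
`μ(eᵢ, eⱼ)` with `i < j`.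
-/

section ProdLie

variable (L M : Type*) [LieRing L] [LieRing M]

/-- The product of two Lie rings, with componentwise bracket. -/
instance Prod.instLieRing : LieRing (L × M) where
  bracket p q := (⁅p.1, q.1⁆, ⁅p.2, q.2⁆)
  add_lie x y z := by
    show (⁅(x+y).1, z.1⁆, ⁅(x+y).2, z.2⁆) = (⁅x.1,z.1⁆, ⁅x.2,z.2⁆) + (⁅y.1,z.1⁆, ⁅y.2,z.2⁆)
    simp only [Prod.fst_add, Prod.snd_add, Prod.mk_add_mk, Prod.mk.injEq]
    exact ⟨add_lie .., add_lie ..⟩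
  lie_add x y z := by
    show (⁅x.1, (y+z).1⁆, ⁅x.2, (y+z).2⁆) = (⁅x.1,y.1⁆, ⁅x.2,y.2⁆) + (⁅x.1,z.1⁆, ⁅x.2,z.2⁆)
    simp only [Prod.fst_add, Prod.snd_add, Prod.mk_add_mk, Prod.mk.injEq]
    exact ⟨lie_add .., lie_add ..⟩
  lie_self x := by
    show (⁅x.1, x.1⁆, ⁅x.2, x.2⁆) = (0 : L × M)
    simp
  leibniz_lie x y z := by
    show (⁅x.1, ⁅y.1,z.1⁆⁆, ⁅x.2, ⁅y.2,z.2⁆⁆)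
      = (⁅⁅x.1,y.1⁆, z.1⁆, ⁅⁅x.2,y.2⁆, z.2⁆) + (⁅y.1, ⁅x.1,z.1⁆⁆, ⁅y.2, ⁅x.2,z.2⁆⁆)
    simp only [Prod.mk_add_mk, Prod.mk.injEq]
    exact ⟨leibniz_lie .., leibniz_lie ..⟩

variable (R : Type*) [CommRing R] [LieAlgebra R L] [LieAlgebra R M]

/-- The product of two Lie algebras, with componentwise bracket. -/
instance Prod.instLieAlgebra : LieAlgebra R (L × M) where
  lie_smul t x y := by
    show (⁅x.1, (t • y).1⁆, ⁅x.2, (t • y).2⁆) = t • (⁅x.1,y.1⁆, ⁅x.2,y.2⁆)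
    simp

@[simp] theorem Prod.bracket_def (p q : L × M) : ⁅p, q⁆ = (⁅p.1, q.1⁆, ⁅p.2, q.2⁆) := rfl

end ProdLie

/-- `Fin 3 → ℝ` regarded as the three-dimensional abelian Lie algebra `3L₁`. -/
instance : LieRing (Fin 3 → ℝ) where
  bracket _ _ := 0
  add_lie _ _ _ := by simp
  lie_add _ _ _ := by simp
  lie_self _ := rfl
  leibniz_lie _ _ _ := by simp

noncomputable instance : LieAlgebra ℝ (Fin 3 → ℝ) where
  lie_smul t x y := by
    show (0 : Fin 3 → ℝ) = t • (0 : Fin 3 → ℝ)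
    simp

attribute [local instance 100] LieRing.ofAssociativeRing

open Matrix in
/-- The Lie algebra `so(3)` of real skew-symmetric `3 × 3` matrices, as a Lie subalgebra of the
matrix Lie algebra with the commutator bracket. -/
def so3 : LieSubalgebra ℝ (Matrix (Fin 3) (Fin 3) ℝ) where
  carrier := {A | Aᵀ = -A}
  add_mem' := by
    intro A B hA hB
    simp only [Set.mem_setOf_eq] at *
    rw [Matrix.transpose_add, hA, hB, neg_add]
  zero_mem' := by simp
  smul_mem' := by
    intro c A hA
    simp only [Set.mem_setOf_eq] at *
    rw [Matrix.transpose_smul, hA, smul_neg]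
  lie_mem' := by
    intro A B hA hB
    simp only [Set.mem_setOf_eq] at *
    rw [Ring.lie_def, Matrix.transpose_sub, Matrix.transpose_mul, Matrix.transpose_mul, hA, hB,
      neg_mul_neg, neg_mul_neg, neg_sub]

open Matrix

section CrossMatrix

variable {R : Type*} [CommRing R]

def crossMatrix : (Fin 3 → R) →ₗ[R] Matrix (Fin 3) (Fin 3) R :=
  LinearMap.toMatrix'.toLinearMap ∘ₗ crossProduct

theorem crossMatrix_mulVec (v w : Fin 3 → R) : crossMatrix v *ᵥ w = v ⨯₃ w :=
  LinearMap.toMatrix'_mulVec _ w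

theorem crossMatrix_transpose (v : Fin 3 → R) : (crossMatrix v)ᵀ = -crossMatrix v := by
  ext i j
  fin_cases i <;> fin_cases j <;> simp [crossMatrix, LinearMap.toMatrix'_apply, cross_apply]

theorem crossMatrix_lie (v w : Fin 3 → R) :
    ⁅crossMatrix v, crossMatrix w⁆ = crossMatrix (v ⨯₃ w) := by
  refine Matrix.ext_iff_mulVec.mpr fun x => ?_
  rw [Ring.lie_def, sub_mulVec, ← mulVec_mulVec, ← mulVec_mulVec]
  simp only [crossMatrix_mulVec, cross_cross]

end CrossMatrix

instance : IsLieAbelian (Fin 3 → ℝ) := ⟨fun _ _ => rfl⟩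

noncomputable def so3Equiv : (Fin 3 → ℝ) ≃ₗ[ℝ] so3 where
  toFun v := ⟨crossMatrix v, crossMatrix_transpose v⟩
  map_add' v w := Subtype.ext (map_add crossMatrix v w)
  map_smul' c v := Subtype.ext (map_smul crossMatrix c v)
  invFun A := ![(A : Matrix (Fin 3) (Fin 3) ℝ) 2 1, (A : Matrix (Fin 3) (Fin 3) ℝ) 0 2,
    (A : Matrix (Fin 3) (Fin 3) ℝ) 1 0]
  left_inv v := by
    ext i
    fin_cases i <;> simp [crossMatrix, LinearMap.toMatrix'_apply, cross_apply]
  right_inv := by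
    rintro ⟨A, hA : Aᵀ = -A⟩
    have hskew : ∀ i j, A j i = -A i j := fun i j => congr_fun₂ hA i j
    refine Subtype.ext (Matrix.ext fun i j => ?_)
    fin_cases i <;> fin_cases j <;> simp [crossMatrix, LinearMap.toMatrix'_apply, cross_apply] <;>
      linarith [hskew 0 0, hskew 1 1, hskew 2 2, hskew 0 1, hskew 1 2, hskew 2 0]

theorem so3Equiv_lie (v w : Fin 3 → ℝ) : ⁅so3Equiv v, so3Equiv w⁆ = so3Equiv (v ⨯₃ w) :=
  Subtype.ext (crossMatrix_lie v w)

section ScaledShear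

variable {K k z : Type*} [Field K] [LieRing k] [LieAlgebra K k] [LieRing z] [LieAlgebra K z]

def scaledShear (S : k →ₗ[K] z) (u : Kˣ) : (k × z) ≃ₗ[K] (k × z) :=
  (LinearEquiv.smulOfUnit u⁻¹).skewProd (LinearEquiv.smulOfUnit u) ((u : K) ^ 2 • S)

theorem scaledShear_symm_lie [IsLieAbelian z] (S : k →ₗ[K] z) (u : Kˣ) (p q : k × z) :
    (scaledShear S u).symm ⁅scaledShear S u p, scaledShear S u q⁆
      = (u⁻¹ : K) • (⁅p.1, q.1⁆, 0) + (0, -S ⁅p.1, q.1⁆) := by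
  have hu : (u : K)⁻¹ * ((u : K)⁻¹ * (u : K) ^ 2) = 1 := by field_simp
  simp [scaledShear, LinearEquiv.smulOfUnit, Units.smul_def, smul_smul, trivial_lie_zero, hu]

end ScaledShear

section A63

variable (R : Type*) [CommRing R]

def a63Bracket : (Fin 6 → R) →ₗ[R] (Fin 6 → R) →ₗ[R] (Fin 6 → R) :=
  LinearMap.mk₂ R
    (fun x y => ![0, 0, 0, x 0 * y 2 - x 2 * y 0, x 2 * y 1 - x 1 * y 2, x 0 * y 1 - x 1 * y 0])
    (fun _ _ _ => by ext i; fin_cases i <;> simp <;> ring)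
    (fun _ _ _ => by ext i; fin_cases i <;> simp <;> ring)
    (fun _ _ _ => by ext i; fin_cases i <;> simp <;> ring)
    (fun _ _ _ => by ext i; fin_cases i <;> simp <;> ring)

theorem a63Bracket_isAlt : (a63Bracket R).IsAlt := fun x => by
  ext i; fin_cases i <;> simp [a63Bracket] <;> ring

end A63

theorem LinearMap.ext_pi_single_of_isAlt {ι R M : Type*} [Finite ι] [LinearOrder ι]
    [CommSemiring R] [AddCommGroup M] [Module R M] {B B' : (ι → R) →ₗ[R] (ι → R) →ₗ[R] M}
    (hB : B.IsAlt) (hB' : B'.IsAlt)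
    (h : ∀ i j, i < j → B (Pi.single i 1) (Pi.single j 1) = B' (Pi.single i 1) (Pi.single j 1)) :
    B = B' := by
  refine LinearMap.ext_basis (Pi.basisFun R ι) (Pi.basisFun R ι) fun i j => ?_
  simp only [Pi.basisFun_apply]
  rcases lt_trichotomy i j with hij | rfl | hij
  · exact h i j hij
  · rw [hB, hB']
  · rw [← hB.neg, ← hB'.neg, h j i hij]

/-- The order and signs of the last three coordinates make `A_{6,3}` the bracket
`(0, -(a × a'))` on `so(3) × ℝ³ ≅ ℝ³ × ℝ³`. -/
@[simps]
noncomputable def a63Coords : (Fin 6 → ℝ) ≃ₗ[ℝ] (Fin 3 → ℝ) × (Fin 3 → ℝ) where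
  toFun x := (![x 0, x 1, x 2], ![x 4, x 3, -x 5])
  invFun p := ![p.1 0, p.1 1, p.1 2, p.2 1, p.2 0, -p.2 2]
  map_add' x y := by ext i <;> fin_cases i <;> simp [add_comm]
  map_smul' c x := by ext i <;> fin_cases i <;> simp
  left_inv x := by ext i; fin_cases i <;> simp
  right_inv p := by ext i <;> fin_cases i <;> simp

noncomputable def so3ProdEquiv : (Fin 6 → ℝ) ≃ₗ[ℝ] so3 × (Fin 3 → ℝ) :=
  a63Coords.trans (so3Equiv.prodCongr (LinearEquiv.refl ℝ _))

theorem so3ProdEquiv_symm_zero_neg_lie_eq_a63Bracket (x y : Fin 6 → ℝ) :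
    so3ProdEquiv.symm (0, -so3Equiv.symm ⁅(so3ProdEquiv x).1, (so3ProdEquiv y).1⁆)
      = a63Bracket ℝ x y := by
  ext i
  fin_cases i <;> simp [so3ProdEquiv, so3Equiv_lie, a63Bracket, cross_apply]

open Filter in
/-- The nilpotent Lie algebra `A_{6,3}`, given on `ℝ⁶` (standard basis
`e₁, …, e₆`) by `μ(e₁,e₂) = e₆`, `μ(e₁,e₃) = e₄`, `μ(e₂,e₃) = −e₅` and all other basis
brackets zero, is a contraction of the reductive Lie algebra `so(3) ⊕ 3L₁`. -/
theorem A63_is_contraction_of_so3_sum_3L1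
    (e : Fin 6 → (Fin 6 → ℝ)) (he : ∀ i, e i = Pi.single i 1)
    (μ : (Fin 6 → ℝ) →ₗ[ℝ] (Fin 6 → ℝ) →ₗ[ℝ] (Fin 6 → ℝ))
    (hskew : ∀ x y, μ x y = - μ y x)
    (h12 : μ (e 0) (e 1) = e 5)
    (h13 : μ (e 0) (e 2) = e 3)
    (h23 : μ (e 1) (e 2) = - e 4)
    (h14 : μ (e 0) (e 3) = 0) (h15 : μ (e 0) (e 4) = 0) (h16 : μ (e 0) (e 5) = 0)
    (h24 : μ (e 1) (e 3) = 0) (h25 : μ (e 1) (e 4) = 0) (h26 : μ (e 1) (e 5) = 0)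
    (h34 : μ (e 2) (e 3) = 0) (h35 : μ (e 2) (e 4) = 0) (h36 : μ (e 2) (e 5) = 0)
    (h45 : μ (e 3) (e 4) = 0) (h46 : μ (e 3) (e 5) = 0) (h56 : μ (e 4) (e 5) = 0) :
    ∃ φ : ℝ → ((Fin 6 → ℝ) ≃ₗ[ℝ] (so3 × (Fin 3 → ℝ))),
      ∀ x y : Fin 6 → ℝ,
        Tendsto (fun t => (φ t).symm ⁅φ t x, φ t y⁆) atTop (nhds (μ x y)) := by
  have hμ : μ = a63Bracket ℝ := by
    refine LinearMap.ext_pi_single_of_isAlt (fun x => self_eq_neg.mp (hskew x x))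
      (a63Bracket_isAlt ℝ) fun i j hij => ?_
    simp only [he] at h12 h13 h23 h14 h15 h16 h24 h25 h26 h34 h35 h36 h45 h46 h56
    fin_cases i <;> fin_cases j <;> simp at hij <;> ext k <;> fin_cases k <;>
      simp [h12, h13, h23, h14, h15, h16, h24, h25, h26, h34, h35, h36, h45, h46, h56, a63Bracket]
  let u : ℝ → ℝˣ := fun t => Units.mk0 (Real.exp t) (Real.exp_ne_zero t)
  refine ⟨fun t => so3ProdEquiv.trans (scaledShear so3Equiv.symm.toLinearMap (u t)), fun x y => ?_⟩
  simp only [LinearEquiv.trans_apply, LinearEquiv.trans_symm, scaledShear_symm_lie, map_add,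
    map_smul, LinearEquiv.coe_coe, so3ProdEquiv_symm_zero_neg_lie_eq_a63Bracket, hμ]
  have hu : Tendsto (fun t => ((u t)⁻¹ : ℝ)) atTop (nhds 0) :=
    Real.tendsto_exp_atTop.inv_tendsto_atTop
  simpa using (hu.smul_const _).add_const (a63Bracket ℝ x y)
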